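/- arXiv:1406.6630 — 6 statements merged into one kernel-verified Lean document; each statement's English description precedes it below -/
import Mathlib

section
/- Let $c$ and $\nu$ be real numbers with $\nu \neq 0$. Then the system $c = k^2 - 3\kappa^2$, $\nu = -2\kappa(k^2+\kappa^2)$ has a real solution $(k,\kappa)$ with $k \geq 0$ if and only if $(c/3)^3 + (\nu/2)^2 \geq 0$. -/
lemma cbrt_exists (a : ℝ) : ∃ x : ℝ, x^3 = a := by
  rcases le_or_gt 0 a with h | h
  · refine ⟨a ^ ((1:ℝ)/3), ?_⟩
    rw [← Real.rpow_natCast (a ^ ((1:ℝ)/3)) 3, ← Real.rpow_mul h]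
    norm_num
  · refine ⟨-((-a) ^ ((1:ℝ)/3)), ?_⟩
    have h' : (0:ℝ) ≤ -a := by linarith
    rw [show (-((-a) ^ ((1:ℝ)/3)))^3 = -(((-a) ^ ((1:ℝ)/3))^3) by ring,
      ← Real.rpow_natCast ((-a) ^ ((1:ℝ)/3)) 3, ← Real.rpow_mul h']
    norm_num

theorem exists_k_kappa_iff_kinematic
    (c ν : ℝ) (hν : ν ≠ 0) :
    (∃ k κ : ℝ, k ≥ 0 ∧ c = k^2 - 3*κ^2 ∧ ν = -2*κ*(k^2 + κ^2)) ↔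
      (c/3)^3 + (ν/2)^2 ≥ 0 := by
  constructor
  · rintro ⟨k, κ, hk, rfl, rfl⟩
    nlinarith [sq_nonneg (k^3), sq_nonneg (k^2*κ), sq_nonneg (k*κ^2)]
  · intro h
    set s := Real.sqrt ((ν/16)^2 + (c/12)^3) with hs
    have hD : (0:ℝ) ≤ (ν/16)^2 + (c/12)^3 := by nlinarith
    have hs2 : s^2 = (ν/16)^2 + (c/12)^3 := Real.sq_sqrt hD
    obtain ⟨u, hu⟩ := cbrt_exists (-ν/16 + s)
    obtain ⟨v, hv⟩ := cbrt_exists (-ν/16 - s)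
    have huv : u * v = -c/12 := by
      have h3 : (u*v)^3 = (-c/12)^3 := by
        have : (u*v)^3 = u^3 * v^3 := by ring
        rw [this, hu, hv]; nlinarith
      exact (Odd.strictMono_pow (R := ℝ) (n := 3) ⟨1, by norm_num⟩).injective h3
    refine ⟨Real.sqrt 3 * |u - v|, u + v, by positivity, ?_, ?_⟩
    · have h1 : (Real.sqrt 3 * |u - v|)^2 = 3 * (u-v)^2 := by
        rw [mul_pow, sq_abs, Real.sq_sqrt (by norm_num : (0:ℝ) ≤ 3)]
      rw [h1]; nlinarith
    · have h1 : (Real.sqrt 3 * |u - v|)^2 = 3 * (u-v)^2 := by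
        rw [mul_pow, sq_abs, Real.sq_sqrt (by norm_num : (0:ℝ) ≤ 3)]
      rw [h1]
      have hsum : u^3 + v^3 = -ν/8 := by rw [hu, hv]; ring
      nlinarith [hsum]
end

section
/- Let $k > 0$, $\kappa \in \mathbb{R}$, and set $c = k^2 - 3\kappa^2$, $\nu = -2\kappa(k^2+\kappa^2)$. Then $c > -(3/\sqrt[3]{4})(\sqrt[3]{|\nu|})^2$ whenever $\kappa \neq 0$. -/
/-- The real cube root. -/
noncomputable def rcbrt (x : ℝ) : ℝ :=
  if x < 0 then -((-x) ^ ((1:ℝ)/3)) else x ^ ((1:ℝ)/3)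

theorem speed_lower_bound
    (k κ c ν : ℝ) (hk : 0 < k) (hκ : κ ≠ 0)
    (hc : c = k^2 - 3*κ^2)
    (hν : ν = -2*κ*(k^2 + κ^2)) :
    c > -(3 / rcbrt 4) * (rcbrt |ν|)^2 := by
  have hν0 : (0:ℝ) ≤ |ν| := abs_nonneg _
  have hX : rcbrt |ν| = |ν| ^ ((1:ℝ)/3) := by
    simp [rcbrt, not_lt.mpr hν0]
  have hY : rcbrt 4 = (4:ℝ) ^ ((1:ℝ)/3) := by
    norm_num [rcbrt]
  set X := rcbrt |ν| with hXdef
  set Y := rcbrt 4 with hYdef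
  have hX3 : X^3 = |ν| := by
    rw [hX, ← Real.rpow_natCast (|ν| ^ ((1:ℝ)/3)) 3, ← Real.rpow_mul hν0]
    norm_num
  have hY3 : Y^3 = 4 := by
    rw [hY, ← Real.rpow_natCast ((4:ℝ) ^ ((1:ℝ)/3)) 3,
      ← Real.rpow_mul (by norm_num : (0:ℝ) ≤ 4)]
    norm_num
  have hXnn : 0 ≤ X := by rw [hX]; positivity
  have hYpos : 0 < Y := by rw [hY]; positivity
  have hνne : ν ≠ 0 := by
    rw [hν]
    intro h
    apply hκ
    have hpos : 0 < k^2 + κ^2 := by positivity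
    have := mul_eq_zero.mp h
    rcases this with h1 | h1
    · have := mul_eq_zero.mp h1
      rcases this with h2 | h2
      · norm_num at h2
      · exact h2
    · linarith
  have hXpos : 0 < X := by
    rcases hXnn.lt_or_eq with h | h
    · exact h
    · exfalso
      apply hνne
      have : |ν| = 0 := by rw [← hX3, ← h]; ring
      exact abs_eq_zero.mp this
  rw [gt_iff_lt, neg_mul, neg_lt, div_mul_eq_mul_div, lt_div_iff₀ hYpos]
  rcases le_or_gt (-c) 0 with h | h
  · have : -c * Y ≤ 0 := mul_nonpos_of_nonpos_of_nonneg h hYpos.le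
    nlinarith [sq_nonneg X]
  · have hcube : (-c * Y)^3 < (3 * X^2)^3 := by
      have hexp : (-c*Y)^3 = (-c)^3 * Y^3 := by ring
      have hexp2 : (3*X^2)^3 = 27 * (X^3)^2 := by ring
      rw [hexp, hexp2, hY3, hX3, sq_abs, hν, hc]
      nlinarith [pow_pos hk 6, mul_nonneg (pow_nonneg hk.le 4) (sq_nonneg κ),
        mul_nonneg (sq_nonneg k) (sq_nonneg (κ^2))]
    have h1 : 0 ≤ 3 * X^2 := by positivity
    exact lt_of_pow_lt_pow_left₀ 3 h1 hcube
end

section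
/- Let $k \neq 0$, $\kappa$ be real, $w = -k(k^2-3\kappa^2)$, $\omega = -\kappa(3k^2-\kappa^2)$, $\phi \in \mathbb{R}$. Then the complex-valued function $u(t,x) = e^{i\phi} e^{i(\kappa x + \omega t)} \cdot \frac{|k|}{2\cosh(kx+wt)}$ satisfies the Hirota equation $u_t + 24|u|^2 u_x + u_{xxx} = 0$. -/
/-!
Write `T = tanh(r y + s)`. The profile `f = a e^{q y} sech(r y + s)` satisfies `f' = f (q - r T)`
and `T' = r (1 - T²)`, so every derivative of `f` is `f` times a polynomial in `T`. For the soliton,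
`|u|² = k²/4 (1 - T²)`, and the Hirota equation divided by `u` becomes a cubic polynomial identity
in `T` whose coefficients vanish exactly by the two dispersion relations.
-/

open Complex Polynomial

/-- If `f' = f (q - r T)` and `T' = r (1 - T²)`, then `(f · P(T))' = f · (sechDerivOp q r P)(T)`. -/
noncomputable def sechDerivOp (q r : ℂ) (P : ℂ[X]) : ℂ[X] :=
  P * (C q - C r * X) + C r * (1 - X ^ 2) * derivative P

section
variable {f T : ℝ → ℂ} {q r : ℂ}

theorem hasDerivAt_mul_eval_comp {y : ℝ} (hf : HasDerivAt f (f y * (q - r * T y)) y)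
    (hT : HasDerivAt T (r * (1 - T y ^ 2)) y) (P : ℂ[X]) :
    HasDerivAt (fun y => f y * P.eval (T y)) (f y * (sechDerivOp q r P).eval (T y)) y := by
  refine (hf.mul ((P.hasDerivAt (T y)).comp y hT)).congr_deriv ?_
  simp only [sechDerivOp, eval_add, eval_mul, eval_sub, eval_C, eval_X, eval_one, eval_pow,
    Function.comp_apply]
  ring

theorem iteratedDeriv_eq_mul_eval_iterate (hf : ∀ y, HasDerivAt f (f y * (q - r * T y)) y)
    (hT : ∀ y, HasDerivAt T (r * (1 - T y ^ 2)) y) (n : ℕ) :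
    iteratedDeriv n f = fun y => f y * ((sechDerivOp q r)^[n] 1).eval (T y) := by
  induction n with
  | zero => simp
  | succ n ih =>
    rw [iteratedDeriv_succ, ih]
    funext y
    rw [Function.iterate_succ_apply']
    exact (hasDerivAt_mul_eval_comp (hf y) (hT y) _).deriv

end

theorem eval_sechDerivOp_iterate_three (q r z : ℂ) :
    ((sechDerivOp q r)^[3] 1).eval z =
      (q - r * z) ^ 3 - 3 * r ^ 2 * (1 - z ^ 2) * (q - r * z) + 2 * r ^ 3 * z * (1 - z ^ 2) := by
  simp only [Function.iterate_succ_apply', Function.iterate_zero_apply, sechDerivOp,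
    derivative_mul, derivative_add, derivative_sub, derivative_one, derivative_zero, derivative_C,
    derivative_X, derivative_X_pow, eval_add, eval_mul, eval_sub, eval_C, eval_X, eval_one,
    eval_pow, eval_zero, eval_natCast, map_natCast]
  ring

theorem Real.hasDerivAt_tanh (x : ℝ) : HasDerivAt Real.tanh (1 - Real.tanh x ^ 2) x := by
  have h := (Real.hasDerivAt_sinh x).div (Real.hasDerivAt_cosh x) (Real.cosh_pos x).ne'
  rw [show Real.tanh = Real.sinh / Real.cosh from funext Real.tanh_eq_sinh_div_cosh]
  refine h.congr_deriv ?_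
  simp only [Pi.div_apply]
  field_simp

theorem Real.sq_div_two_cosh (c x : ℝ) :
    (c / (2 * Real.cosh x)) ^ 2 = c ^ 2 / 4 * (1 - Real.tanh x ^ 2) := by
  have := (Real.cosh_pos x).ne'
  rw [Real.tanh_eq_sinh_div_cosh]
  field_simp
  linear_combination (-4) * c ^ 2 * Real.cosh_sq x

noncomputable def modulatedSech (a q : ℂ) (r s : ℝ) (y : ℝ) : ℂ :=
  a * exp (q * y) / Real.cosh (r * y + s)

section
variable (a q : ℂ) (r s : ℝ)

theorem hasDerivAt_ofReal_tanh_affine (y : ℝ) :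
    HasDerivAt (fun y : ℝ => (Real.tanh (r * y + s) : ℂ))
      (r * (1 - (Real.tanh (r * y + s) : ℂ) ^ 2)) y :=
  ((Real.hasDerivAt_tanh _).comp y (((hasDerivAt_id' y).const_mul r).add_const s)).ofReal_comp
    |>.congr_deriv (by push_cast; ring)

theorem hasDerivAt_modulatedSech (y : ℝ) :
    HasDerivAt (modulatedSech a q r s)
      (modulatedSech a q r s y * (q - r * Real.tanh (r * y + s))) y := by
  have hcosh : HasDerivAt (fun y : ℝ => (Real.cosh (r * y + s) : ℂ))
      (Real.sinh (r * y + s) * r) y :=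
    ((Real.hasDerivAt_cosh _).comp y (((hasDerivAt_id' y).const_mul r).add_const s)).ofReal_comp
      |>.congr_deriv (by push_cast; ring)
  have hexp : HasDerivAt (fun y : ℝ => exp (q * y)) (exp (q * y) * q) y :=
    (((hasDerivAt_id' (y : ℂ)).const_mul q).cexp.comp_ofReal).congr_deriv (by ring)
  have hc : (Real.cosh (r * y + s) : ℂ) ≠ 0 := by exact_mod_cast (Real.cosh_pos _).ne'
  refine ((hexp.const_mul a).div hcosh hc).congr_deriv ?_
  rw [modulatedSech, Real.tanh_eq_sinh_div_cosh, ofReal_div]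
  field_simp

theorem iteratedDeriv_modulatedSech (n : ℕ) (y : ℝ) :
    iteratedDeriv n (modulatedSech a q r s) y =
      modulatedSech a q r s y * ((sechDerivOp q r)^[n] 1).eval (Real.tanh (r * y + s) : ℂ) :=
  congrFun (iteratedDeriv_eq_mul_eval_iterate (hasDerivAt_modulatedSech a q r s)
    (hasDerivAt_ofReal_tanh_affine r s) n) y

end

theorem hirota_dispersion_identity (k κ z : ℂ) :
    (I * (-κ * (3 * k ^ 2 - κ ^ 2)) - (-k * (k ^ 2 - 3 * κ ^ 2)) * z)
      + 6 * k ^ 2 * (1 - z ^ 2) * (I * κ - k * z)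
      + ((sechDerivOp (I * κ) k)^[3] 1).eval z = 0 := by
  rw [eval_sechDerivOp_iterate_three]
  linear_combination (κ ^ 3 * I - 3 * κ ^ 2 * k * z) * I_sq

open Complex in
theorem hirota_modulated_soliton_solves_hirota_general
    (k κ w ω φ : ℝ)
    (hw : w = -k * (k^2 - 3*κ^2))
    (hω : ω = -κ * (3*k^2 - κ^2))
    (u : ℝ → ℝ → ℂ)
    (hu : ∀ t x, u t x = Complex.exp (I * φ) * Complex.exp (I * (κ*x + ω*t)) *
        ((|k| : ℝ) / (2 * Real.cosh (k*x + w*t)))) :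
    ∀ t x : ℝ,
      deriv (fun t' => u t' x) t
        + 24 * ((‖u t x‖)^2 : ℝ) * deriv (fun x' => u t x') x
        + iteratedDeriv 3 (fun x' => u t x') x = 0 := by
  intro t x
  have hx (y : ℝ) : u t y =
      modulatedSech (exp (I * φ) * exp (I * ω * t) * (|k| / 2 : ℝ)) (I * κ) k (w * t) y := by
    simp only [hu, modulatedSech, mul_add, exp_add, ← mul_assoc]
    push_cast
    ring
  have ht (y : ℝ) : u y x =
      modulatedSech (exp (I * φ) * exp (I * κ * x) * (|k| / 2 : ℝ)) (I * ω) w (k * x) y := by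
    simp only [hu, modulatedSech, mul_add, exp_add, ← mul_assoc, add_comm (k * x)]
    push_cast
    ring
  have hnorm : ‖u t x‖ = |k| / (2 * Real.cosh (k * x + w * t)) := by
    rw [hu]
    simp [Complex.norm_exp, -Complex.ofReal_cosh, abs_of_pos (Real.cosh_pos _)]
  rw [funext hx, funext ht, iteratedDeriv_modulatedSech, (hasDerivAt_modulatedSech _ _ _ _ _).deriv,
    (hasDerivAt_modulatedSech _ _ _ _ _).deriv, ← hx, ← ht, add_comm (w * t), hnorm,
    Real.sq_div_two_cosh, sq_abs]
  generalize Real.tanh (k * x + w * t) = T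
  subst hw hω
  push_cast
  linear_combination u t x * hirota_dispersion_identity k κ T

open Complex in
theorem hirota_modulated_soliton_solves_hirota
    (k κ w ω φ : ℝ) (hk : k ≠ 0)
    (hw : w = -k * (k^2 - 3*κ^2))
    (hω : ω = -κ * (3*k^2 - κ^2))
    (u : ℝ → ℝ → ℂ)
    (hu : ∀ t x, u t x = Complex.exp (I * φ) * Complex.exp (I * (κ*x + ω*t)) *
        ((|k| : ℝ) / (2 * Real.cosh (k*x + w*t)))) :
    ∀ t x : ℝ,
      deriv (fun t' => u t' x) t
        + 24 * ((‖u t x‖)^2 : ℝ) * deriv (fun x' => u t x') x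
        + iteratedDeriv 3 (fun x' => u t x') x = 0 :=
  hirota_modulated_soliton_solves_hirota_general k κ w ω φ hw hω u hu
end

section
/- Let $k \neq 0$ and $\kappa \neq 0$ be real, let $\lambda = \arg(\kappa(\kappa+ik))$, and let $\tilde{f}_{SS}(\xi) = \frac{k(2|\kappa|)^{1/2}(k^2+\kappa^2)^{1/4} e^{i\kappa\xi}\cosh(k\xi + i\lambda/2)}{|\kappa|\cosh(2k\xi)+(k^2+\kappa^2)^{1/2}}$ be the Sasa-Satsuma amplitude. Then $|\tilde{f}_{SS}(\xi)|^2$ has a critical point at $\xi_0 \neq 0$ if and only if $\cosh(2k\xi_0) = (k^2-\kappa^2)/(|\kappa|\sqrt{k^2+\kappa^2})$, and this equation has a real solution $\xi_0 \neq 0$ if and only if $k^2 > 3\kappa^2$. -/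
private lemma exists_cosh_eq (R : ℝ) (hR : 1 < R) : ∃ t : ℝ, 0 < t ∧ Real.cosh t = R := by
  have h1 : (0:ℝ) ≤ R^2 - 1 := by nlinarith
  have hsq : Real.sqrt (R^2-1) ^ 2 = R^2 - 1 := Real.sq_sqrt h1
  have hnn := Real.sqrt_nonneg (R^2-1)
  set u := R + Real.sqrt (R^2 - 1) with hu
  have hu1 : 1 < u := by simp only [hu]; linarith
  have hu0 : 0 < u := by linarith
  refine ⟨Real.log u, Real.log_pos hu1, ?_⟩
  rw [Real.cosh_eq, Real.exp_log hu0, Real.exp_neg, Real.exp_log hu0]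
  have key : u * (R - Real.sqrt (R^2-1)) = 1 := by
    simp only [hu]; nlinarith
  rw [inv_eq_of_mul_eq_one_right key]
  simp only [hu]; ring

open Complex in
theorem ss_amplitude_critical_points
    (k κ : ℝ) (hk : k ≠ 0) (hκ : κ ≠ 0)
    (lam : ℝ) (hlam : lam = Complex.arg ((κ : ℂ) * (κ + I * k)))
    (f : ℝ → ℂ)
    (hf : ∀ ξ, f ξ =
      ((k : ℂ) * (Real.sqrt (2 * |κ|) : ℝ) * (((k^2 + κ^2) ^ ((1:ℝ)/4) : ℝ) : ℂ)
          * Complex.exp (I * (κ*ξ)) * Complex.cosh (k*ξ + I * (lam/2)))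
        / ((|κ| * Real.cosh (2*k*ξ) + Real.sqrt (k^2 + κ^2) : ℝ)))
    (g : ℝ → ℝ) (hg : ∀ ξ, g ξ = ‖f ξ‖^2) :
    (∀ ξ₀ : ℝ, ξ₀ ≠ 0 →
      (deriv g ξ₀ = 0 ↔
        Real.cosh (2*k*ξ₀) = (k^2 - κ^2) / (|κ| * Real.sqrt (k^2 + κ^2)))) ∧
    ((∃ ξ₀ : ℝ, ξ₀ ≠ 0 ∧
        Real.cosh (2*k*ξ₀) = (k^2 - κ^2) / (|κ| * Real.sqrt (k^2 + κ^2))) ↔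
      k^2 > 3*κ^2) := by
  have hs : (0:ℝ) < k^2 + κ^2 := by positivity
  set s : ℝ := k^2 + κ^2 with hsdef
  set sq : ℝ := Real.sqrt s with hsqdef
  have hsqpos : 0 < sq := Real.sqrt_pos.mpr hs
  have hsq2 : sq^2 = k^2 + κ^2 := Real.sq_sqrt hs.le
  set aκ : ℝ := |κ| with haκdef
  have haκ0 : 0 < aκ := abs_pos.mpr hκ
  have haκ2 : aκ^2 = κ^2 := sq_abs κ
  have hk2 : (0:ℝ) < k^2 := by positivity
  have hκ2 : (0:ℝ) < κ^2 := by positivity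
  -- cos lam
  have hwne : ((κ:ℂ) * (κ + I*k)) ≠ 0 := by
    apply mul_ne_zero
    · exact_mod_cast hκ
    · intro h
      have : ((κ:ℂ) + I*k).im = 0 := by rw [h]; simp
      simp at this; exact hk this
  have hcosl : Real.cos lam = aκ / sq := by
    rw [hlam, Complex.cos_arg hwne]
    have habs : ‖((κ:ℂ) * (κ + I*k))‖ = aκ * sq := by
      rw [norm_mul]
      have h1 : ‖(κ:ℂ)‖ = aκ := Complex.norm_real κ
      have h2 : ‖((κ:ℂ) + I*k)‖ = sq := by
        rw [Complex.norm_def]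
        rw [hsqdef]
        congr 1
        simp [Complex.normSq_apply]
        ring
      rw [h1, h2]
    have hre : ((κ:ℂ) * (κ + I*k)).re = κ^2 := by
      simp [Complex.mul_re, Complex.mul_im]
      ring
    rw [habs, hre, ← haκ2]
    field_simp
  -- normSq of cosh term
  have hnormsq : ∀ ξ : ℝ, Complex.normSq (Complex.cosh ((k:ℂ)*(ξ:ℂ) + I*((lam:ℂ)/2)))
      = (Real.cosh (2*k*ξ) + aκ/sq)/2 := by
    intro ξ
    have e1 : ((k:ℂ)*(ξ:ℂ) + I*((lam:ℂ)/2)) = ((k*ξ : ℝ):ℂ) + ((lam/2 : ℝ):ℂ) * I := by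
      push_cast; ring
    rw [e1, Complex.cosh_add, Complex.cosh_mul_I, Complex.sinh_mul_I,
      ← Complex.ofReal_cosh, ← Complex.ofReal_sinh, ← Complex.ofReal_cos, ← Complex.ofReal_sin]
    have e2 : ((Real.cosh (k*ξ) : ℝ):ℂ) * ((Real.cos (lam/2):ℝ):ℂ)
        + ((Real.sinh (k*ξ):ℝ):ℂ) * (((Real.sin (lam/2):ℝ):ℂ) * I)
        = ((Real.cosh (k*ξ) * Real.cos (lam/2) : ℝ) : ℂ)
          + ((Real.sinh (k*ξ) * Real.sin (lam/2) : ℝ):ℂ)*I := by push_cast; ring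
    rw [e2, Complex.normSq_add_mul_I]
    have hc2 : Real.cos lam = 2 * Real.cos (lam/2)^2 - 1 := by
      have := Real.cos_two_mul (lam/2)
      rwa [show 2*(lam/2) = lam by ring] at this
    have hpy : Real.sin (lam/2)^2 + Real.cos (lam/2)^2 = 1 := Real.sin_sq_add_cos_sq _
    have hch : Real.cosh (2*k*ξ) = Real.cosh (k*ξ)^2 + Real.sinh (k*ξ)^2 := by
      have := Real.cosh_two_mul (k*ξ)
      rwa [show 2*(k*ξ) = 2*k*ξ by ring] at this
    have hsh : Real.cosh (k*ξ)^2 - Real.sinh (k*ξ)^2 = 1 := Real.cosh_sq_sub_sinh_sq _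
    rw [hcosl] at hc2
    have hq : aκ/sq = 2 * Real.cos (lam/2)^2 - 1 := hc2
    rw [hch, hq]
    nlinarith [hpy, hsh]
  have hD : ∀ ξ : ℝ, 0 < aκ * Real.cosh (2*k*ξ) + sq := by
    intro ξ
    have h1 := Real.one_le_cosh (2*k*ξ)
    nlinarith
  have hG : ∀ ξ, g ξ = k^2 * aκ * (sq * Real.cosh (2*k*ξ) + aκ) / (aκ * Real.cosh (2*k*ξ) + sq)^2 := by
    intro ξ
    rw [hg, Complex.sq_norm, hf, map_div₀, map_mul, map_mul, map_mul, map_mul]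
    have n1 : Complex.normSq (k:ℂ) = k^2 := by rw [Complex.normSq_ofReal]; ring
    have n2 : Complex.normSq ((Real.sqrt (2*aκ) : ℝ):ℂ) = 2*aκ := by
      rw [Complex.normSq_ofReal, Real.mul_self_sqrt (by positivity)]
    have n3 : Complex.normSq ((s ^ ((1:ℝ)/4) : ℝ):ℂ) = sq := by
      rw [Complex.normSq_ofReal, ← Real.rpow_add hs, hsqdef, Real.sqrt_eq_rpow]
      norm_num
    have n4 : Complex.normSq (Complex.exp (I * ((κ:ℂ)*(ξ:ℂ)))) = 1 := by
      rw [Complex.normSq_eq_norm_sq, Complex.norm_exp]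
      simp [Complex.mul_re]
    have n5 : Complex.normSq ((aκ * Real.cosh (2*k*ξ) + sq : ℝ):ℂ)
        = (aκ * Real.cosh (2*k*ξ) + sq)^2 := by
      rw [Complex.normSq_ofReal]; ring
    rw [n1, n2, n3, n4, n5, hnormsq ξ]
    have hDne := (hD ξ).ne'
    field_simp
  have hgG : g = fun ξ => k^2 * aκ * (sq * Real.cosh (2*k*ξ) + aκ) / (aκ * Real.cosh (2*k*ξ) + sq)^2 :=
    funext hG
  constructor
  · intro ξ₀ hξ₀
    set c := Real.cosh (2*k*ξ₀) with hc
    set S := Real.sinh (2*k*ξ₀) with hS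
    have hSne : S ≠ 0 := by
      rw [hS, Real.sinh_ne_zero]
      exact mul_ne_zero (mul_ne_zero two_ne_zero hk) hξ₀
    have hcder : HasDerivAt (fun ξ : ℝ => Real.cosh (2*k*ξ)) (S*(2*k)) ξ₀ := by
      have h1 : HasDerivAt (fun ξ : ℝ => 2*k*ξ) (2*k) ξ₀ := by
        simpa using (hasDerivAt_id ξ₀).const_mul (2*k)
      exact (Real.hasDerivAt_cosh (2*k*ξ₀)).comp ξ₀ h1
    have hN : HasDerivAt (fun ξ => k^2*aκ*(sq*Real.cosh (2*k*ξ)+aκ))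
        (k^2*aκ*(sq*(S*(2*k)))) ξ₀ := ((hcder.const_mul sq).add_const aκ).const_mul _
    have hDp : HasDerivAt (fun ξ => (aκ*Real.cosh (2*k*ξ)+sq)^2)
        (2*(aκ*c+sq)*(aκ*(S*(2*k)))) ξ₀ := by
      have h2 := ((hcder.const_mul aκ).add_const sq).fun_pow 2
      simpa [hc] using h2
    have hDne : (aκ*c+sq)^2 ≠ 0 := pow_ne_zero 2 (hD ξ₀).ne'
    have hdiv := hN.fun_div hDp (by simpa [hc] using hDne)
    have hderiv : deriv g ξ₀ =
        (k^2*aκ*(sq*(S*(2*k))) * (aκ*c+sq)^2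
          - k^2*aκ*(sq*c+aκ) * (2*(aκ*c+sq)*(aκ*(S*(2*k))))) / ((aκ*c+sq)^2)^2 := by
      rw [hgG]
      simpa [hc] using hdiv.deriv
    rw [hderiv]
    rw [div_eq_zero_iff]
    have hDD : ((aκ*c+sq)^2)^2 ≠ 0 := pow_ne_zero 2 hDne
    have hNum : k^2*aκ*(sq*(S*(2*k))) * (aκ*c+sq)^2
          - k^2*aκ*(sq*c+aκ) * (2*(aκ*c+sq)*(aκ*(S*(2*k))))
        = (2*k*S*(k^2*aκ)*(aκ*c+sq)) * ((k^2 - κ^2) - aκ*sq*c) := by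
      linear_combination (2*k*S*(k^2*aκ)*(aκ*c+sq)) * hsq2 - 2*(2*k*S*(k^2*aκ)*(aκ*c+sq)) * haκ2
    rw [hNum]
    constructor
    · rintro (h | h)
      · have hA : (2*k*S*(k^2*aκ)*(aκ*c+sq)) ≠ 0 := by
          have hD0 : aκ*c+sq ≠ 0 := by
            have := (hD ξ₀).ne'; rwa [← hc] at this
          exact mul_ne_zero (mul_ne_zero (mul_ne_zero (mul_ne_zero two_ne_zero hk) hSne)
            (mul_ne_zero (pow_ne_zero 2 hk) haκ0.ne')) hD0
        have hB := (mul_eq_zero.mp h).resolve_left hA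
        rw [eq_div_iff (by positivity : aκ * sq ≠ 0)]
        linarith
      · exact absurd h hDD
    · intro h
      left
      apply mul_eq_zero_of_right
      rw [eq_div_iff (by positivity : aκ * sq ≠ 0)] at h
      linarith
  · constructor
    · rintro ⟨ξ₀, hξ₀, hcosh⟩
      have h1 : 1 < Real.cosh (2*k*ξ₀) := Real.one_lt_cosh.mpr
        (mul_ne_zero (mul_ne_zero two_ne_zero hk) hξ₀)
      rw [hcosh, lt_div_iff₀ (by positivity)] at h1
      nlinarith [mul_pos haκ0 hsqpos, hsq2, haκ2]
    · intro h3
      have hR1 : 1 < (k^2-κ^2)/(aκ*sq) := by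
        rw [lt_div_iff₀ (by positivity)]
        nlinarith [mul_pos haκ0 hsqpos, hsq2, haκ2]
      obtain ⟨t, ht0, hct⟩ := exists_cosh_eq _ hR1
      refine ⟨t/(2*k), ?_, ?_⟩
      · exact div_ne_zero ht0.ne' (mul_ne_zero two_ne_zero hk)
      · rw [show 2*k*(t/(2*k)) = t by field_simp]
        exact hct
end

section
/- For $c > 0$ and $\kappa \neq 0$ with $k^2 = 3\kappa^2 + c$, $k > 0$, the Sasa-Satsuma oscillatory 1-soliton peak height is $\frac{1}{2}(k^2+\kappa^2)^{1/2}$; that is, at the point $\xi_0 > 0$ where $\cosh(2k\xi_0) = (k^2-\kappa^2)/(|\kappa|\sqrt{k^2+\kappa^2})$, the amplitude $|\tilde{f}_{SS}(\xi_0)|$ equals $\frac{1}{2}\sqrt{k^2+\kappa^2}$. -/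
/-!
Since `|cosh (x + i y)|² = (cosh 2x + cos 2y) / 2` and `cos λ = |κ| / s` with `s = √(k² + κ²)`,
the squared amplitude of the soliton is `k² |κ| (s cosh 2kξ + |κ|) / (|κ| cosh 2kξ + s)²`.
At the critical point the two factors become `k² / |κ|` and `2k² / s`, leaving `s² / 4`.
-/

open Complex

theorem Complex.sq_norm_cosh_add_mul_I (x y : ℝ) :
    ‖cosh (x + y * I)‖ ^ 2 = (Real.cosh (2 * x) + Real.cos (2 * y)) / 2 := by
  have hre : cosh (x + y * I) =
      (Real.cosh x * Real.cos y : ℝ) + (Real.sinh x * Real.sin y : ℝ) * I := by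
    rw [cosh_add, cosh_mul_I, sinh_mul_I]
    push_cast
    ring
  rw [hre, Complex.sq_norm, normSq_add_mul_I, mul_pow, mul_pow, Real.sinh_sq, Real.sin_sq,
    Real.cosh_two_mul, Real.sinh_sq, Real.cos_two_mul]
  ring

theorem cos_arg_ofReal_mul_ofReal_add_I_mul {κ : ℝ} (hκ : κ ≠ 0) (k : ℝ) :
    Real.cos (arg ((κ : ℂ) * (κ + I * k))) = |κ| / √(k ^ 2 + κ ^ 2) := by
  have hnorm : ‖(κ : ℂ) * (κ + I * k)‖ = |κ| * √(k ^ 2 + κ ^ 2) := by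
    rw [norm_mul, norm_real, Real.norm_eq_abs, mul_comm I, norm_add_mul_I, add_comm (κ ^ 2)]
  have hne : (κ : ℂ) * (κ + I * k) ≠ 0 := by
    rw [← norm_ne_zero_iff, hnorm]
    have : 0 < √(k ^ 2 + κ ^ 2) := Real.sqrt_pos.mpr (by positivity)
    positivity
  rw [cos_arg hne, hnorm]
  have hre : ((κ : ℂ) * (κ + I * k)).re = |κ| * |κ| := by simp
  rw [hre, mul_div_mul_left _ _ (abs_ne_zero.mpr hκ)]

noncomputable def sasaSatsumaSoliton (k κ ξ : ℝ) : ℂ :=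
  ((k : ℂ) * (√(2 * |κ|) : ℝ) * (((k ^ 2 + κ ^ 2) ^ ((1 : ℝ) / 4) : ℝ) : ℂ)
      * exp (I * (κ * ξ)) * cosh (k * ξ + I * (arg ((κ : ℂ) * (κ + I * k)) / 2)))
    / ((|κ| * Real.cosh (2 * k * ξ) + √(k ^ 2 + κ ^ 2) : ℝ))

theorem sq_norm_sasaSatsumaSoliton {κ : ℝ} (hκ : κ ≠ 0) (k ξ : ℝ) :
    ‖sasaSatsumaSoliton k κ ξ‖ ^ 2 =
      k ^ 2 * |κ| * (√(k ^ 2 + κ ^ 2) * Real.cosh (2 * k * ξ) + |κ|)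
        / (|κ| * Real.cosh (2 * k * ξ) + √(k ^ 2 + κ ^ 2)) ^ 2 := by
  have hquarter : ((k ^ 2 + κ ^ 2) ^ ((1 : ℝ) / 4)) ^ 2 = √(k ^ 2 + κ ^ 2) := by
    rw [← Real.rpow_natCast, ← Real.rpow_mul (by positivity), Real.sqrt_eq_rpow]
    norm_num
  have hcosh : ‖cosh (k * ξ + I * (arg ((κ : ℂ) * (κ + I * k)) / 2))‖ ^ 2
      = (Real.cosh (2 * k * ξ) + |κ| / √(k ^ 2 + κ ^ 2)) / 2 := by
    have := Complex.sq_norm_cosh_add_mul_I (k * ξ) (arg ((κ : ℂ) * (κ + I * k)) / 2)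
    push_cast at this
    rw [mul_comm I, this, mul_div_cancel₀ _ two_ne_zero, cos_arg_ofReal_mul_ofReal_add_I_mul hκ,
      mul_assoc]
  have hexp : ‖exp (I * (κ * ξ))‖ = 1 := by exact_mod_cast norm_exp_I_mul_ofReal (κ * ξ)
  rw [sasaSatsumaSoliton, norm_div, norm_mul, norm_mul, norm_mul, norm_mul, hexp, div_pow,
    mul_pow, mul_pow, mul_pow, mul_pow, hcosh]
  simp only [norm_real, Real.norm_eq_abs, sq_abs, hquarter,
    Real.sq_sqrt (by positivity : (0 : ℝ) ≤ 2 * |κ|)]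
  field_simp

open Complex in
theorem ss_peak_height_positive_speed_general
    (k κ : ℝ) (hk : 0 < k) (hκ : κ ≠ 0)
    (lam : ℝ) (hlam : lam = Complex.arg ((κ : ℂ) * (κ + I * k)))
    (f : ℝ → ℂ)
    (hf : ∀ ξ, f ξ =
      ((k : ℂ) * (Real.sqrt (2 * |κ|) : ℝ) * (((k^2 + κ^2) ^ ((1:ℝ)/4) : ℝ) : ℂ)
          * Complex.exp (I * (κ*ξ)) * Complex.cosh (k*ξ + I * (lam/2)))
        / ((|κ| * Real.cosh (2*k*ξ) + Real.sqrt (k^2 + κ^2) : ℝ)))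
    (ξ₀ : ℝ)
    (hcrit : Real.cosh (2*k*ξ₀) = (k^2 - κ^2) / (|κ| * Real.sqrt (k^2 + κ^2))) :
    ‖f ξ₀‖ = Real.sqrt (k^2 + κ^2) / 2 := by
  subst hlam
  have hf₀ : f ξ₀ = sasaSatsumaSoliton k κ ξ₀ := hf ξ₀
  rw [← sq_eq_sq₀ (norm_nonneg _) (by positivity), hf₀, sq_norm_sasaSatsumaSoliton hκ, hcrit]
  field_simp
  rw [sq_abs, Real.sq_sqrt (by positivity)]
  ring

open Complex in
theorem ss_peak_height_positive_speed
    (k κ c : ℝ) (hk : 0 < k) (hκ : κ ≠ 0)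
    (hc : c = k^2 - 3*κ^2) (hcpos : 0 < c)
    (lam : ℝ) (hlam : lam = Complex.arg ((κ : ℂ) * (κ + I * k)))
    (f : ℝ → ℂ)
    (hf : ∀ ξ, f ξ =
      ((k : ℂ) * (Real.sqrt (2 * |κ|) : ℝ) * (((k^2 + κ^2) ^ ((1:ℝ)/4) : ℝ) : ℂ)
          * Complex.exp (I * (κ*ξ)) * Complex.cosh (k*ξ + I * (lam/2)))
        / ((|κ| * Real.cosh (2*k*ξ) + Real.sqrt (k^2 + κ^2) : ℝ)))
    (ξ₀ : ℝ) (hξ₀ : 0 < ξ₀)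
    (hcrit : Real.cosh (2*k*ξ₀) = (k^2 - κ^2) / (|κ| * Real.sqrt (k^2 + κ^2))) :
    ‖f ξ₀‖ = Real.sqrt (k^2 + κ^2) / 2 :=
  ss_peak_height_positive_speed_general k κ hk hκ lam hlam f hf ξ₀ hcrit
end

section
/- Let $\mathrm{k} \in \mathbb{C}$ with $\mathrm{Re}\,\mathrm{k} \neq 0$, $\mathrm{w} = -\mathrm{k}^3$, $A \in \mathbb{C}\setminus\{0\}$, and $B = 4|A|^2/(\mathrm{k}+\bar{\mathrm{k}})^2$. Then $u(t,x) = \frac{A e^{\Theta}}{1 + B e^{\Theta + \bar{\Theta}}}$ with $\Theta = \mathrm{k}x + \mathrm{w}t$ satisfies the Hirota equation $u_t + 24|u|^2 u_x + u_{xxx} = 0$ for all real $t, x$. -/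
/-!
Fix `t` (or `x`). Along the other variable the soliton has the shape `A e^{as+p} / (1 + β)` with
`β = B e^{ws+r}` and `β' = wβ`, so by the quotient rule its `n`-th derivative is
`A e^{as+p} Pₙ(β) / (1 + β)^{n+1}` for explicit polynomials `Pₙ`. Since `e^{Θ+Θ̄} = |e^Θ|²` is real and
`B ≥ 0`, the denominator never vanishes, and `|u|² = |A|² e^{Θ+Θ̄} / (1 + β)²`. Using
`4|A|² = B (k + k̄)²`, the Hirota equation becomes a polynomial identity in `β`.
-/

open Complex ComplexConjugate Polynomial

/-- `solitonNumerator a w n` is `Pₙ`; the recursion is the quotient rule in the variable `β`. -/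
noncomputable def solitonNumerator (a w : ℂ) : ℕ → ℂ[X]
  | 0 => 1
  | n + 1 => (C a * solitonNumerator a w n + C w * X * derivative (solitonNumerator a w n)) * (1 + X)
      - C ((n + 1) * w) * X * solitonNumerator a w n

noncomputable def solitonDeriv (A B a w p r : ℂ) (n : ℕ) (s : ℝ) : ℂ :=
  A * exp (a * s + p) * (solitonNumerator a w n).eval (B * exp (w * s + r))
    / (1 + B * exp (w * s + r)) ^ (n + 1)

lemma solitonDeriv_zero (A B a w p r : ℂ) (s : ℝ) :
    solitonDeriv A B a w p r 0 s = A * exp (a * s + p) / (1 + B * exp (w * s + r)) := by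
  simp [solitonDeriv, solitonNumerator]

lemma hasDerivAt_exp_mul_ofReal_add (a p : ℂ) (s : ℝ) :
    HasDerivAt (fun s : ℝ => exp (a * s + p)) (a * exp (a * s + p)) s := by
  have h := ((((hasDerivAt_id (s : ℂ)).const_mul a).add_const p).cexp).comp_ofReal
  simpa [mul_comm] using h

lemma hasDerivAt_solitonDeriv (A B a w p r : ℂ) (n : ℕ) {s : ℝ}
    (hD : 1 + B * exp (w * s + r) ≠ 0) :
    HasDerivAt (solitonDeriv A B a w p r n) (solitonDeriv A B a w p r (n + 1) s) s := by
  have hE := hasDerivAt_exp_mul_ofReal_add a p s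
  have hβ : HasDerivAt (fun s : ℝ => B * exp (w * s + r)) (w * (B * exp (w * s + r))) s :=
    ((hasDerivAt_exp_mul_ofReal_add w r s).const_mul B).congr_deriv (mul_left_comm _ _ _)
  have hP := ((solitonNumerator a w n).hasDerivAt (B * exp (w * s + r))).comp s hβ
  have h := ((hE.const_mul A).mul hP).div ((hβ.const_add 1).pow (n + 1)) (pow_ne_zero _ hD)
  refine h.congr_deriv ?_
  simp only [solitonDeriv, solitonNumerator, eval_sub, eval_mul, eval_add, eval_C, eval_X, eval_one,
    Pi.mul_apply, Pi.pow_apply, Function.comp_apply, Nat.add_sub_cancel, Nat.cast_add, Nat.cast_one]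
  generalize B * exp (w * s + r) = β at hD ⊢
  field_simp
  ring

lemma iteratedDeriv_solitonDeriv_zero (A B a w p r : ℂ)
    (hD : ∀ s : ℝ, 1 + B * exp (w * s + r) ≠ 0) (n : ℕ) :
    iteratedDeriv n (solitonDeriv A B a w p r 0) = solitonDeriv A B a w p r n := by
  induction n with
  | zero => exact iteratedDeriv_zero
  | succ n ih =>
    rw [iteratedDeriv_succ, ih]
    exact funext fun s => (hasDerivAt_solitonDeriv A B a w p r n (hD s)).deriv

lemma solitonNumerator_hirota (k c β : ℂ) :
    (solitonNumerator (-k ^ 3) (-k ^ 3 - c ^ 3) 1).eval β * (1 + β) ^ 2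
      + 6 * (k + c) ^ 2 * β * (solitonNumerator k (k + c) 1).eval β
      + (solitonNumerator k (k + c) 3).eval β = 0 := by
  simp only [solitonNumerator, derivative_mul, derivative_add, derivative_sub, derivative_C,
    derivative_X, derivative_one, derivative_zero, eval_mul, eval_add, eval_sub, eval_C, eval_X,
    eval_one, eval_zero]
  ring

lemma hirota_residual_eq_zero (A b E W k c N : ℂ) (hD : 1 + b * W ≠ 0)
    (hN : 4 * N = b * (k + c) ^ 2) :
    A * E * (solitonNumerator (-k ^ 3) (-k ^ 3 - c ^ 3) 1).eval (b * W) / (1 + b * W) ^ 2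
      + 24 * (N * W / (1 + b * W) ^ 2)
        * (A * E * (solitonNumerator k (k + c) 1).eval (b * W) / (1 + b * W) ^ 2)
      + A * E * (solitonNumerator k (k + c) 3).eval (b * W) / (1 + b * W) ^ 4 = 0 := by
  field_simp
  linear_combination A * E * solitonNumerator_hirota k c (b * W)
    + 6 * A * E * W * (solitonNumerator k (k + c) 1).eval (b * W) * hN

lemma one_add_mul_exp_add_conj_ne_zero {b : ℝ} (hb : 0 ≤ b) (z : ℂ) :
    1 + b * exp (z + conj z) ≠ 0 := by
  rw [add_conj, ← ofReal_exp]
  exact_mod_cast (by positivity : 0 < 1 + b * Real.exp (2 * z.re)).ne'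

lemma sq_norm_mul_exp_div (A z : ℂ) (b : ℝ) :
    ((‖A * exp z / (1 + b * exp (z + conj z))‖ ^ 2 : ℝ) : ℂ)
      = ‖A‖ ^ 2 * exp (z + conj z) / (1 + b * exp (z + conj z)) ^ 2 := by
  have hD : conj (1 + b * exp (z + conj z)) = 1 + b * exp (z + conj z) := by
    simp only [map_add, map_one, map_mul, conj_ofReal, ← exp_conj, conj_conj, add_comm (conj z)]
  push_cast
  rw [← mul_conj', ← mul_conj', map_div₀, hD, map_mul, ← exp_conj]
  generalize 1 + b * exp (z + conj z) = D
  rw [exp_add]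
  ring

open Complex in
theorem hirota_one_soliton_bilinear_form_general
    (k A : ℂ) (hk : k.re ≠ 0)
    (B : ℂ) (hB : B = 4 * ((‖A‖ : ℝ) : ℂ)^2 / (k + (starRingEnd ℂ) k)^2)
    (u : ℝ → ℝ → ℂ)
    (hu : ∀ t x, u t x =
      A * Complex.exp (k*x + (-k^3)*t)
        / (1 + B * Complex.exp ((k*x + (-k^3)*t) +
            ((starRingEnd ℂ) k * x + (-(starRingEnd ℂ) k^3) * t)))) :
    ∀ t x : ℝ,
      deriv (fun t' => u t' x) t
        + 24 * ((‖u t x‖)^2 : ℝ) * deriv (fun x' => u t x') x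
        + iteratedDeriv 3 (fun x' => u t x') x = 0 := by
  intro t x
  have hkc : k + conj k ≠ 0 := by
    rw [add_conj]; exact_mod_cast mul_ne_zero two_ne_zero hk
  obtain ⟨b, hb, rfl⟩ : ∃ b : ℝ, 0 ≤ b ∧ B = b :=
    ⟨4 * ‖A‖ ^ 2 / (2 * k.re) ^ 2, by positivity, by rw [hB, add_conj]; push_cast; ring⟩
  have hΘ : ∀ s y : ℝ, conj (k * y + -k ^ 3 * s) = conj k * y + -conj k ^ 3 * s := by
    intro s y; simp
  simp only [← hΘ] at hu
  set c := conj k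
  have hW : ∀ s y : ℝ, (k * y + -k ^ 3 * s) + conj (k * y + -k ^ 3 * s)
      = (k + c) * y + (-k ^ 3 - c ^ 3) * s := by
    intro s y; rw [hΘ]; ring
  have hN : 4 * ((‖A‖ : ℝ) : ℂ) ^ 2 = b * (k + c) ^ 2 := by
    rw [hB]; field_simp
  have hux : (fun x' => u t x') = solitonDeriv A b k (k + c) (-k ^ 3 * t) ((-k ^ 3 - c ^ 3) * t) 0 :=
    funext fun y => by rw [hu, hW, solitonDeriv_zero]
  have hut : (fun t' => u t' x) = solitonDeriv A b (-k ^ 3) (-k ^ 3 - c ^ 3) (k * x) ((k + c) * x) 0 :=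
    funext fun s => by rw [hu, hW, solitonDeriv_zero]; ring_nf
  have hDx : ∀ y : ℝ, 1 + b * exp ((k + c) * y + (-k ^ 3 - c ^ 3) * t) ≠ 0 := fun y => by
    rw [← hW]; exact one_add_mul_exp_add_conj_ne_zero hb _
  have hDt : ∀ s : ℝ, 1 + b * exp ((-k ^ 3 - c ^ 3) * s + (k + c) * x) ≠ 0 := fun s => by
    rw [add_comm ((-k ^ 3 - c ^ 3) * (s : ℂ)), ← hW]; exact one_add_mul_exp_add_conj_ne_zero hb _
  rw [hux, hut, iteratedDeriv_solitonDeriv_zero _ _ _ _ _ _ hDx,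
    (hasDerivAt_solitonDeriv _ _ _ _ _ _ 0 (hDx x)).deriv,
    (hasDerivAt_solitonDeriv _ _ _ _ _ _ 0 (hDt t)).deriv, hu, sq_norm_mul_exp_div, hW]
  simp only [solitonDeriv]
  rw [add_comm (-k ^ 3 * (t : ℂ)), add_comm ((-k ^ 3 - c ^ 3) * (t : ℂ))]
  exact hirota_residual_eq_zero A b _ _ k c _ (hDx x) hN

open Complex in
theorem hirota_one_soliton_bilinear_form
    (k A : ℂ) (hk : k.re ≠ 0) (hA : A ≠ 0)
    (B : ℂ) (hB : B = 4 * ((‖A‖ : ℝ) : ℂ)^2 / (k + (starRingEnd ℂ) k)^2)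
    (u : ℝ → ℝ → ℂ)
    (hu : ∀ t x, u t x =
      A * Complex.exp (k*x + (-k^3)*t)
        / (1 + B * Complex.exp ((k*x + (-k^3)*t) +
            ((starRingEnd ℂ) k * x + (-(starRingEnd ℂ) k^3) * t)))) :
    ∀ t x : ℝ,
      deriv (fun t' => u t' x) t
        + 24 * ((‖u t x‖)^2 : ℝ) * deriv (fun x' => u t x') x
        + iteratedDeriv 3 (fun x' => u t x') x = 0 :=
  hirota_one_soliton_bilinear_form_general k A hk B hB u hu
end
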